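/- Let λ = (λ_1 ≤ ... ≤ λ_m), μ = (μ_1 ≤ ... ≤ μ_m) be weakly increasing integer sequences and let Q(λ,μ) = {w ∈ S_m : λ_i ≤ μ_{w(i)} + 1 for all i}. Then Q(λ,μ) is a lower ideal in the Bruhat order: if w ∈ Q(λ,μ) and x ≤ w in the Bruhat order, then x ∈ Q(λ,μ). -/

import Mathlib

/-!
A Bruhat step `y < z` has the form `z = y * (i j)` with `i < j`, and then `y i < y j`: right
multiplication by `(i j)` at an ascent strictly increases the number of inversions, because the
involution on pairs that fixes the pairs meeting the open interval `(i, j)` and applies `(i j)` to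
both entries of the others maps the inversions of `y` into those of `y * (i j)`, missing `(i, j)`.
So passing from `z` to `y` moves the smaller value `y i` to the earlier position `i`, and by
monotonicity of `λ` and `μ` the condition `λ_k ≤ μ_{w(k)} + 1` for `y` at `k = i, j` follows from
the one for `z` at `j`.
-/

/-- The length (number of inversions) of a permutation of `Fin m`. -/
def PermLength {m : ℕ} (w : Equiv.Perm (Fin m)) : ℕ :=
  (Finset.univ.filter (fun p : Fin m × Fin m => p.1 < p.2 ∧ w p.2 < w p.1)).card

/-- The Bruhat order on `S_m`. -/
def BruhatLE {m : ℕ} (x w : Equiv.Perm (Fin m)) : Prop :=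
  Relation.ReflTransGen
    (fun y z => PermLength y < PermLength z ∧
      ∃ t : Equiv.Perm (Fin m), t.IsSwap ∧ z = t * y) x w

open Equiv

namespace Equiv.Perm

variable {α : Type*} [LinearOrder α]

lemma swap_apply_mem_Ioo_iff {i j x : α} (hij : i < j) :
    swap i j x ∈ Set.Ioo i j ↔ x ∈ Set.Ioo i j := by
  rcases eq_or_ne x i with rfl | hxi
  · simp
  rcases eq_or_ne x j with rfl | hxj
  · simp
  · rw [swap_apply_of_ne_of_ne hxi hxj]

def swapOutsideIoo (i j : α) (p : α × α) : α × α :=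
  if p.1 ∈ Set.Ioo i j ∨ p.2 ∈ Set.Ioo i j then p else (swap i j p.1, swap i j p.2)

lemma swapOutsideIoo_involutive {i j : α} (hij : i < j) :
    Function.Involutive (swapOutsideIoo i j) := by
  intro p
  unfold swapOutsideIoo
  split_ifs with hp hq
  · rfl
  · simp only [swap_apply_mem_Ioo_iff hij] at hq
    exact absurd hq hp
  · simp

lemma swap_apply_lt_swap_apply_of_notMem_Ioo {i j a b : α} (hij : i < j) (hab : a < b)
    (ha : a ∉ Set.Ioo i j) (hb : b ∉ Set.Ioo i j) (hne : (a, b) ≠ (i, j)) :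
    swap i j a < swap i j b := by
  simp only [swap_apply_def, Set.mem_Ioo, ne_eq, Prod.mk.injEq] at *
  grind

lemma mul_swap_apply_lt_of_mem_Ioo {u : Perm α} {i j a b : α} (hu : u i < u j)
    (hab : a < b) (hba : u b < u a) (h : a ∈ Set.Ioo i j ∨ b ∈ Set.Ioo i j) :
    (u * swap i j) b < (u * swap i j) a := by
  simp only [Perm.mul_apply, swap_apply_def, Set.mem_Ioo] at *
  grind

variable [Fintype α]

def inversions (w : Perm α) : Finset (α × α) :=
  Finset.univ.filter fun p => p.1 < p.2 ∧ w p.2 < w p.1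

@[simp]
lemma mem_inversions {w : Perm α} {p : α × α} : p ∈ inversions w ↔ p.1 < p.2 ∧ w p.2 < w p.1 := by
  simp [inversions]

lemma swapOutsideIoo_mem_inversions {u : Perm α} {i j : α} (hij : i < j) (hu : u i < u j)
    {p : α × α} (hp : p ∈ inversions u) : swapOutsideIoo i j p ∈ inversions (u * swap i j) := by
  obtain ⟨a, b⟩ := p
  rw [mem_inversions] at hp ⊢
  obtain ⟨hab, hba⟩ := hp
  unfold swapOutsideIoo
  split_ifs with h
  · exact ⟨hab, mul_swap_apply_lt_of_mem_Ioo hu hab hba h⟩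
  · rw [not_or] at h
    have hne : (a, b) ≠ (i, j) := by
      rintro ⟨⟩
      exact hu.not_gt hba
    refine ⟨swap_apply_lt_swap_apply_of_notMem_Ioo hij hab h.1 h.2 hne, ?_⟩
    simpa only [Perm.mul_apply, swap_apply_self] using hba

theorem card_inversions_lt_mul_swap {u : Perm α} {i j : α} (hij : i < j) (hu : u i < u j) :
    (inversions u).card < (inversions (u * swap i j)).card := by
  have hinv := swapOutsideIoo_involutive hij
  have hsub : (inversions u).image (swapOutsideIoo i j) ⊂ inversions (u * swap i j) := by
    refine (Finset.ssubset_iff_of_subset ?_).2 ⟨(i, j), ?_, ?_⟩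
    · intro q hq
      obtain ⟨p, hp, rfl⟩ := Finset.mem_image.1 hq
      exact swapOutsideIoo_mem_inversions hij hu hp
    · exact mem_inversions.2 ⟨hij, by simpa using hu⟩
    · intro hq
      obtain ⟨p, hp, hpq⟩ := Finset.mem_image.1 hq
      have hp' : p = (j, i) := by
        rw [← hinv p, hpq]
        simp [swapOutsideIoo]
      subst hp'
      exact hij.not_gt (mem_inversions.1 hp).1
  simpa only [Finset.card_image_of_injective _ hinv.injective] using Finset.card_lt_card hsub

theorem lt_of_card_inversions_lt_mul_swap {y : Perm α} {i j : α} (hij : i < j)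
    (hy : (inversions y).card < (inversions (y * swap i j)).card) : y i < y j := by
  by_contra! hji
  have hlt : (y * swap i j) i < (y * swap i j) j := by
    simpa using lt_of_le_of_ne hji (y.injective.ne hij.ne')
  have := card_inversions_lt_mul_swap hij hlt
  rw [mul_swap_mul_self] at this
  exact this.not_gt hy

end Equiv.Perm

open Equiv.Perm

lemma permLength_eq_card_inversions {m : ℕ} (w : Perm (Fin m)) :
    PermLength w = (inversions w).card :=
  rfl

lemma exists_mul_swap_of_bruhat_step {m : ℕ} {y z t : Perm (Fin m)}
    (hlen : PermLength y < PermLength z) (ht : t.IsSwap) (hz : z = t * y) :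
    ∃ i j, i < j ∧ y i < y j ∧ z = y * swap i j := by
  obtain ⟨a, b, -, rfl⟩ := ht
  rw [swap_mul_eq_mul_swap] at hz
  subst hz
  simp only [permLength_eq_card_inversions] at hlen
  rcases lt_trichotomy (y⁻¹ a) (y⁻¹ b) with h | h | h
  · exact ⟨_, _, h, lt_of_card_inversions_lt_mul_swap h hlen, rfl⟩
  · simp [h, ← Perm.one_def] at hlen
  · rw [swap_comm] at hlen ⊢
    exact ⟨_, _, h, lt_of_card_inversions_lt_mul_swap h hlen, rfl⟩

lemma forall_le_of_forall_le_mul_swap {ι β : Type*} [LinearOrder ι] [Preorder β]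
    {lam g : ι → β} (hlam : Monotone lam) (hg : Monotone g) {y : Perm ι} {i j : ι}
    (hij : i ≤ j) (hy : y i ≤ y j) (h : ∀ k, lam k ≤ g ((y * swap i j) k)) :
    ∀ k, lam k ≤ g (y k) := by
  intro k
  have hj : lam j ≤ g (y i) := by simpa using h j
  rcases eq_or_ne k i with rfl | hki
  · exact (hlam hij).trans hj
  rcases eq_or_ne k j with rfl | hkj
  · exact hj.trans (hg hy)
  · simpa [swap_apply_of_ne_of_ne hki hkj] using h k

/-- `Q(λ,μ) = {w : λ_i ≤ μ_{w(i)} + 1 ∀ i}` is a lower ideal in the Bruhat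
order. -/
theorem stmt11 {m : ℕ} (lam mu : Fin m → ℤ) (hlam : Monotone lam) (hmu : Monotone mu)
    (w x : Equiv.Perm (Fin m)) (hw : ∀ i, lam i ≤ mu (w i) + 1)
    (hxw : BruhatLE x w) :
    ∀ i, lam i ≤ mu (x i) + 1 := by
  induction hxw using Relation.ReflTransGen.head_induction_on with
  | refl => exact hw
  | head hstep _ ih =>
    obtain ⟨hlen, t, ht, hz⟩ := hstep
    obtain ⟨i, j, hij, hy, rfl⟩ := exists_mul_swap_of_bruhat_step hlen ht hz
    exact forall_le_of_forall_le_mul_swap hlam (hmu.add_const 1) hij.le hy.le ih
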